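/- The three Born-rule exclusions of the modified Frauchiger–Renner paradox: let ψ^{t=2} = (e₀⊗e₀⊗e₀⊗e₀ + e₁⊗e₁⊗e₀⊗e₀ + e₁⊗e₁⊗e₁⊗e₁)/√3 in EuclideanSpace ℂ ((Fin 2 × Fin 2) × (Fin 2 × Fin 2)) (tensor factors ordered S_A, L_A, S_B, L_B), and let ok = (e₀⊗e₀ − e₁⊗e₁)/√2 in EuclideanSpace ℂ (Fin 2 × Fin 2). Then: (i) ⟪ok ⊗ (e₀⊗e₀), ψ^{t=2}⟫ = 0 (Ursula excludes b = 0 given u = ok); (ii) ⟪(e₁⊗e₁) ⊗ ok, ψ^{t=2}⟫ = 0 (Wigner excludes a = 1 given w = ok); and (iii) ⟪(e₀⊗e₀) ⊗ (e₁⊗e₁), ψ^{t=2}⟫ = 0 (Zeno excludes the joint outcome a = 0, b = 1). -/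

import Mathlib

open scoped InnerProductSpace

noncomputable section

/-- Standard basis vectors `e₀, e₁` of `ℂ²`. -/
def e (a : Fin 2) : EuclideanSpace ℂ (Fin 2) := EuclideanSpace.single a 1

/-- Twofold product vector: `(eₐ⊗e_b)(j,k) = eₐ(j)·e_b(k)`. -/
def tp2 (φ χ : EuclideanSpace ℂ (Fin 2)) :
    EuclideanSpace ℂ (Fin 2 × Fin 2) :=
  WithLp.toLp 2 (fun p : Fin 2 × Fin 2 => φ p.1 * χ p.2)

/-- Product of two two-qubit vectors:
`(φ⊗χ)((j,k),(l,m)) = φ(j,k)·χ(l,m)`. -/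
def tpPair (φ χ : EuclideanSpace ℂ (Fin 2 × Fin 2)) :
    EuclideanSpace ℂ ((Fin 2 × Fin 2) × (Fin 2 × Fin 2)) :=
  WithLp.toLp 2 (fun p : (Fin 2 × Fin 2) × (Fin 2 × Fin 2) => φ p.1 * χ p.2)

/-- State of the Frauchiger–Renner protocol after the friends' measurements
are modelled unitarily (tensor factors ordered `S_A, L_A, S_B, L_B`). -/
def ψt2 : EuclideanSpace ℂ ((Fin 2 × Fin 2) × (Fin 2 × Fin 2)) :=
  (Real.sqrt 3 : ℂ)⁻¹ •
    (tpPair (tp2 (e 0) (e 0)) (tp2 (e 0) (e 0)) +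
      tpPair (tp2 (e 1) (e 1)) (tp2 (e 0) (e 0)) +
      tpPair (tp2 (e 1) (e 1)) (tp2 (e 1) (e 1)))

/-- The superobservers' supermeasurement basis vector
`ok = (e₀⊗e₀ − e₁⊗e₁)/√2`. -/
def ok : EuclideanSpace ℂ (Fin 2 × Fin 2) :=
  (Real.sqrt 2 : ℂ)⁻¹ • (tp2 (e 0) (e 0) - tp2 (e 1) (e 1))

/-!
Inner products of product vectors factor, and `e₀, e₁` are orthonormal, so each amplitude is a
short sum over the three branches of `ψt2`. In (i) and (ii) the two branches surviving the
projection contribute `⟪ok, e₀⊗e₀⟫ + ⟪ok, e₁⊗e₁⟫ = (1 - 1)/√2`; in (iii) no branch has `a = 0`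
and `b = 1`.
-/

theorem EuclideanSpace.inner_toLp_mul_mul {𝕜 ι κ : Type*} [RCLike 𝕜] [Fintype ι] [Fintype κ]
    (φ φ' : EuclideanSpace 𝕜 ι) (χ χ' : EuclideanSpace 𝕜 κ) :
    ⟪WithLp.toLp 2 (fun p : ι × κ => φ p.1 * χ p.2),
      WithLp.toLp 2 (fun p : ι × κ => φ' p.1 * χ' p.2)⟫_𝕜 = ⟪φ, φ'⟫_𝕜 * ⟪χ, χ'⟫_𝕜 := by
  simp only [PiLp.inner_apply, RCLike.inner_apply, Fintype.sum_prod_type, Finset.sum_mul_sum,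
    map_mul]
  refine Finset.sum_congr rfl fun i _ => Finset.sum_congr rfl fun j _ => ?_
  ring

theorem inner_tp2_tp2 (φ φ' χ χ' : EuclideanSpace ℂ (Fin 2)) :
    ⟪tp2 φ χ, tp2 φ' χ'⟫_ℂ = ⟪φ, φ'⟫_ℂ * ⟪χ, χ'⟫_ℂ :=
  EuclideanSpace.inner_toLp_mul_mul φ φ' χ χ'

theorem inner_tpPair_tpPair (φ φ' χ χ' : EuclideanSpace ℂ (Fin 2 × Fin 2)) :
    ⟪tpPair φ χ, tpPair φ' χ'⟫_ℂ = ⟪φ, φ'⟫_ℂ * ⟪χ, χ'⟫_ℂ :=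
  EuclideanSpace.inner_toLp_mul_mul φ φ' χ χ'

theorem inner_e_e (a b : Fin 2) : ⟪e a, e b⟫_ℂ = if a = b then 1 else 0 := by
  simp [e, EuclideanSpace.inner_single_left, PiLp.single_apply]

theorem inner_tp2_diag (a b : Fin 2) :
    ⟪tp2 (e a) (e a), tp2 (e b) (e b)⟫_ℂ = if a = b then 1 else 0 := by
  rw [inner_tp2_tp2, inner_e_e]
  split_ifs <;> simp

theorem inner_ok_tp2_diag (a : Fin 2) :
    ⟪ok, tp2 (e a) (e a)⟫_ℂ = (Real.sqrt 2 : ℂ)⁻¹ * if a = 0 then 1 else -1 := by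
  rw [ok, inner_smul_left, inner_sub_left, inner_tp2_diag, inner_tp2_diag]
  fin_cases a <;> simp

/-- The three Born-rule exclusions of the modified Frauchiger–Renner paradox:
(i) Ursula excludes `b = 0` given `u = ok`; (ii) Wigner excludes `a = 1` given
`w = ok`; (iii) Zeno excludes the joint outcome `a = 0, b = 1`. -/
theorem fr_born_rule_exclusions :
    ⟪tpPair ok (tp2 (e 0) (e 0)), ψt2⟫_ℂ = 0 ∧
    ⟪tpPair (tp2 (e 1) (e 1)) ok, ψt2⟫_ℂ = 0 ∧
    ⟪tpPair (tp2 (e 0) (e 0)) (tp2 (e 1) (e 1)), ψt2⟫_ℂ = 0 := by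
  refine ⟨?_, ?_, ?_⟩ <;>
    simp only [ψt2, inner_smul_right, inner_add_right, inner_tpPair_tpPair, inner_tp2_diag,
      inner_ok_tp2_diag] <;>
    simp
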